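/- Let α ≥ 3 and κ ≥ ω be cardinals, and let {X_i : i ∈ I} be a set of topological spaces such that |I|⁺ ≥ κ and α ≤ S(X_i) for each i ∈ I. Then: (a) α^{<κ} ≤ S((X_I)_κ); and (b) if in addition α < κ, then 2^{<κ} = α^{<κ} and (α^{<κ})⁺ ≤ S((X_I)_κ). -/

import Mathlib

open Cardinal TopologicalSpace Set

universe u

/-- The `κ`-box topology on a product of topological spaces: generated by the boxes
`Π i, U i` with each `U i` open and fewer than `κ` coordinates restricted. -/
def boxTopology (κ : Cardinal.{u}) {ι : Type u} (X : ι → Type u)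
    [∀ i, TopologicalSpace (X i)] : TopologicalSpace (∀ i, X i) :=
  TopologicalSpace.generateFrom
    {S | ∃ U : ∀ i, Set (X i), (∀ i, IsOpen (U i)) ∧
      #{i | U i ≠ Set.univ} < κ ∧ S = Set.pi Set.univ U}

/-- A cellular family: a family of pairwise disjoint nonempty open sets. -/
def IsCellular {X : Type u} [TopologicalSpace X] (C : Set (Set X)) : Prop :=
  (∀ U ∈ C, IsOpen U ∧ U.Nonempty) ∧ C.Pairwise fun U V => Disjoint U V

/-- The Souslin number: the least cardinal `c` such that no cellular family has
cardinality `c` (finite values allowed). -/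
noncomputable def souslin (X : Type u) [TopologicalSpace X] : Cardinal.{u} :=
  sInf {c | ¬∃ C : Set (Set X), IsCellular C ∧ #C = c}

/-!
A family of boxes, each with fewer than `κ` nontrivial coordinates and any two of them disjoint in
some coordinate, is cellular in the `κ`-box product. Products of cellular families over fewer than
`κ` coordinates give cellular families of size `∏ g t` with `g t < α`, and every `c < α ^ μ` with
`μ < κ` lies below such a product (for infinite `α ≥ κ` by a cofinality argument). For (b) a single
family of size `2 ^< κ = α ^< κ` is needed: for `κ = ν⁺` it is the product of `ν` disjoint pairs,
and for limit `κ ≤ #ι` the family of branches of the binary tree of height `κ`. Souslin numbers do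
not increase along continuous surjections such as the restriction to a set of coordinates, so these
families may be built on any set of coordinates of the right size.
-/

open Topology

section Souslin

variable {X Y : Type u} [TopologicalSpace X] [TopologicalSpace Y]

theorem IsCellular.mono {C D : Set (Set X)} (hC : IsCellular C) (hD : D ⊆ C) : IsCellular D :=
  ⟨fun U hU => hC.1 U (hD hU), hC.2.mono hD⟩

theorem exists_isCellular_of_lt_souslin {c : Cardinal.{u}} (h : c < souslin X) :
    ∃ C : Set (Set X), IsCellular C ∧ #C = c :=
  not_not.1 (notMem_of_lt_csInf h (OrderBot.bddBelow _))

theorem not_exists_isCellular_mk_eq_souslin :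
    ¬∃ C : Set (Set X), IsCellular C ∧ #C = souslin X :=
  csInf_mem (s := {c | ¬∃ C : Set (Set X), IsCellular C ∧ #C = c})
    ⟨Order.succ #(Set X), fun ⟨C, _, hC⟩ =>
      (Order.lt_succ #(Set X)).not_ge (hC ▸ mk_set_le C)⟩

theorem IsCellular.mk_lt_souslin {C : Set (Set X)} (hC : IsCellular C) : #C < souslin X := by
  by_contra! h
  obtain ⟨D, hDC, hD⟩ := le_mk_iff_exists_subset.1 h
  exact not_exists_isCellular_mk_eq_souslin ⟨D, hC.mono hDC, hD⟩

theorem lt_souslin_iff {c : Cardinal.{u}} :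
    c < souslin X ↔ ∃ C : Set (Set X), IsCellular C ∧ c ≤ #C :=
  ⟨fun h => (exists_isCellular_of_lt_souslin h).imp fun _ hC => ⟨hC.1, hC.2.ge⟩,
    fun ⟨_, hC, hc⟩ => hc.trans_lt hC.mk_lt_souslin⟩

theorem exists_pairwise_disjoint_of_mk_lt_souslin {β : Type u} (h : #β < souslin X) :
    ∃ U : β → Set X, (∀ b, IsOpen (U b) ∧ (U b).Nonempty) ∧
      Pairwise fun b b' => Disjoint (U b) (U b') := by
  obtain ⟨C, hC, hCβ⟩ := exists_isCellular_of_lt_souslin h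
  obtain ⟨e⟩ := Cardinal.eq.1 hCβ.symm
  exact ⟨fun b => e b, fun b => hC.1 _ (e b).2,
    fun b b' hbb' => hC.2 (e b).2 (e b').2 fun h => hbb' (e.injective (Subtype.ext h))⟩

theorem nonempty_of_one_lt_souslin (h : 1 < souslin X) : Nonempty X := by
  obtain ⟨U, hU, -⟩ := exists_pairwise_disjoint_of_mk_lt_souslin (β := PUnit) (by rwa [mk_punit])
  obtain ⟨x, -⟩ := (hU ⟨⟩).2
  exact ⟨x⟩

theorem souslin_le_of_continuous_of_surjective {f : X → Y} (hf : Continuous f)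
    (hsurj : Function.Surjective f) : souslin Y ≤ souslin X := by
  refine le_of_forall_lt fun c hc => ?_
  obtain ⟨C, hC, hcC⟩ := lt_souslin_iff.1 hc
  refine lt_souslin_iff.2 ⟨preimage f '' C, ⟨?_, ?_⟩, ?_⟩
  · rintro _ ⟨U, hU, rfl⟩
    exact ⟨(hC.1 U hU).1.preimage hf, (hC.1 U hU).2.preimage hsurj⟩
  · rintro _ ⟨U, hU, rfl⟩ _ ⟨V, hV, rfl⟩ hUV
    exact (hC.2 hU hV fun h => hUV (h ▸ rfl)).preimage f
  · rwa [mk_image_eq (preimage_injective.2 hsurj)]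

end Souslin

section BinaryTree

open scoped Ordinal

variable {K : Type u} [LinearOrder K]

/-- A branch `⟨j, F⟩` of the binary tree of height `K` is coded on `K ⊕ K`: the left copy marks
its length `j`, the right copy carries its bits `F`. -/
def branchCode (d : Σ j : K, (Iio j → Bool)) : K ⊕ K → Option Bool
  | .inl k => if k < d.1 then some false else if k = d.1 then some true else none
  | .inr k => if h : k < d.1 then some (d.2 ⟨k, h⟩) else none

theorem setOf_isSome_branchCode_subset (d : Σ j : K, (Iio j → Bool)) :
    {t | (branchCode d t).isSome} ⊆ Sum.inl '' Iic d.1 ∪ Sum.inr '' Iio d.1 := by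
  rintro (k | k) hk
  · refine .inl ⟨k, ?_, rfl⟩
    by_contra hkd
    simp_all [branchCode, (not_le.1 hkd).ne', not_lt_of_gt (not_le.1 hkd)]
  · refine .inr ⟨k, ?_, rfl⟩
    by_contra hkd
    simp_all [branchCode]

theorem exists_branchCode_ne_of_ne {d d' : Σ j : K, (Iio j → Bool)} (h : d ≠ d') :
    ∃ t b b', branchCode d t = some b ∧ branchCode d' t = some b' ∧ b ≠ b' := by
  obtain ⟨j, F⟩ := d
  obtain ⟨j', F'⟩ := d'
  rcases lt_trichotomy j j' with hj | rfl | hj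
  · exact ⟨.inl j, true, false, by simp [branchCode, hj]⟩
  · obtain ⟨k, hk⟩ := Function.ne_iff.1 fun hF : F = F' => h (hF ▸ rfl)
    have hkj : (k : K) < j := k.2
    exact ⟨.inr k, F k, F' k, by simpa [branchCode, hkj] using hk⟩
  · exact ⟨.inl j', false, true, by simp [branchCode, hj]⟩

theorem exists_mk_Iio_eq [WellFoundedLT K] (hK : (#K).ord = typeLT K) {c : Cardinal.{u}}
    (hc : c < #K) : ∃ j : K, #(Iio j) = c := by
  have hc' : c.ord < typeLT K := hK ▸ ord_lt_ord.2 hc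
  refine ⟨Ordinal.enum (α := K) (· < ·) ⟨c.ord, hc'⟩, ?_⟩
  conv_rhs => rw [← card_ord c, ← Ordinal.typein_enum (α := K) (· < ·) hc', Ordinal.card_typein]
  rfl

theorem two_powerlt_le_mk_branches [WellFoundedLT K] (hK : (#K).ord = typeLT K) :
    2 ^< #K ≤ #(Σ j : K, (Iio j → Bool)) := by
  refine powerlt_le.2 fun c hc => ?_
  obtain ⟨j, rfl⟩ := exists_mk_Iio_eq hK hc
  rw [mk_sigma]
  refine le_trans ?_ (le_sum _ j)
  simp

end BinaryTree

theorem domRestrict_surjective {ι : Type u} {X : ι → Type u} [∀ i, Nonempty (X i)] (S : Set ι) :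
    Function.Surjective (S.domRestrict (π := X)) := by
  classical
  exact fun y => ⟨fun i => if h : i ∈ S then y ⟨i, h⟩ else Classical.arbitrary _,
    funext fun s => dif_pos s.2⟩

section BoxTopology

variable {κ : Cardinal.{u}} {ι : Type u} {X : ι → Type u} [∀ i, TopologicalSpace (X i)]

theorem isOpen_pi_boxTopology {U : ∀ i, Set (X i)} (hU : ∀ i, IsOpen (U i))
    (hsupp : #{i | U i ≠ Set.univ} < κ) : IsOpen[boxTopology κ X] (pi univ U) :=
  .basic _ ⟨U, hU, hsupp, rfl⟩

theorem continuous_domRestrict_boxTopology (S : Set ι) :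
    Continuous[boxTopology κ X, boxTopology κ fun s : S => X s] S.domRestrict := by
  refine continuous_generateFrom_iff.2 ?_
  rintro _ ⟨U, hU, hsupp, rfl⟩
  classical
  let V : ∀ i, Set (X i) := fun i => if h : i ∈ S then U ⟨i, h⟩ else univ
  have hV : S.domRestrict ⁻¹' pi univ U = pi univ V := by
    ext x
    simp only [mem_preimage, mem_univ_pi, Subtype.forall, V]
    refine ⟨fun hx i => ?_, fun hx i hi => by simpa [hi] using hx i⟩
    split_ifs with hi
    exacts [hx i hi, mem_univ _]
  rw [hV]
  refine isOpen_pi_boxTopology (fun i => ?_) ((mk_le_mk_of_subset ?_).trans_lt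
    ((mk_image_le (f := Subtype.val)).trans_lt hsupp))
  · by_cases hi : i ∈ S <;> simp [V, hi, hU, isOpen_univ]
  · intro i hi
    by_cases hiS : i ∈ S
    · exact ⟨⟨i, hiS⟩, by simpa [V, hiS] using hi, rfl⟩
    · simp [V, hiS] at hi

theorem souslin_boxTopology_subtype_le [∀ i, Nonempty (X i)] (S : Set ι) :
    @souslin _ (boxTopology κ fun s : S => X s) ≤ @souslin _ (boxTopology κ X) :=
  @souslin_le_of_continuous_of_surjective _ _ (boxTopology κ X) (boxTopology κ _) _
    (continuous_domRestrict_boxTopology S) (domRestrict_surjective S)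

theorem mk_lt_souslin_boxTopology {D : Type u} (W : D → ∀ i, Set (X i))
    (hW : ∀ d i, IsOpen (W d i) ∧ (W d i).Nonempty) (hsupp : ∀ d, #{i | W d i ≠ Set.univ} < κ)
    (hdisj : Pairwise fun d d' => ∃ i, Disjoint (W d i) (W d' i)) :
    #D < @souslin _ (boxTopology κ X) := by
  let := boxTopology κ X
  have hne (d : D) : (pi univ (W d)).Nonempty := univ_pi_nonempty_iff.2 fun i => (hW d i).2
  have hdisj' : Pairwise fun d d' => Disjoint (pi univ (W d)) (pi univ (W d')) :=
    fun d d' h => disjoint_univ_pi.2 (hdisj h)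
  have hinj : Function.Injective fun d => pi univ (W d) := fun d d' h => by
    by_contra hdd'
    have hself : Disjoint (pi univ (W d)) (pi univ (W d')) := hdisj' hdd'
    rw [← show pi univ (W d) = pi univ (W d') from h] at hself
    exact (hne d).ne_empty (disjoint_self.1 hself)
  refine lt_souslin_iff.2 ⟨range fun d => pi univ (W d), ⟨?_, ?_⟩, (mk_range_eq _ hinj).ge⟩
  · rintro _ ⟨d, rfl⟩
    exact ⟨isOpen_pi_boxTopology (fun i => (hW d i).1) (hsupp d), hne d⟩
  · rintro _ ⟨d, rfl⟩ _ ⟨d', rfl⟩ h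
    exact hdisj' fun hdd' => h (hdd' ▸ rfl)

theorem prod_lt_souslin_boxTopology (hι : #ι < κ) (g : ι → Cardinal.{u})
    (hg : ∀ i, g i < souslin (X i)) : prod g < @souslin _ (boxTopology κ X) := by
  choose U hU hUdisj using fun i =>
    exists_pairwise_disjoint_of_mk_lt_souslin ((mk_out (g i)).trans_lt (hg i))
  have hprod : prod g = #(∀ i, (g i).out) := by simp [mk_pi]
  refine hprod ▸ mk_lt_souslin_boxTopology (fun d i => U i (d i)) (fun d i => hU i (d i))
    (fun _ => (mk_set_le _).trans_lt hι) fun d d' h => ?_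
  obtain ⟨i, hi⟩ := Function.ne_iff.1 h
  exact ⟨i, hUdisj i hi⟩

theorem prod_lt_souslin_boxTopology_of_mk_le [∀ i, Nonempty (X i)] {T : Type u} (hTι : #T ≤ #ι)
    (hTκ : #T < κ) (g : T → Cardinal.{u}) (hg : ∀ t i, g t < souslin (X i)) :
    prod g < @souslin _ (boxTopology κ X) := by
  obtain ⟨S, hS⟩ := le_mk_iff_exists_set.1 hTι
  obtain ⟨σ⟩ := Cardinal.eq.1 hS
  have hprod : prod (fun s => g (σ s)) = prod g := by
    simpa [mk_pi] using mk_congr (Equiv.piCongrLeft (fun t => (g t).out) σ)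
  exact hprod ▸ (prod_lt_souslin_boxTopology (hS ▸ hTκ) _ fun s => hg _ _).trans_le
    (souslin_boxTopology_subtype_le S)

theorem two_powerlt_lt_souslin_boxTopology (hκ : ℵ₀ ≤ κ) (hι : #ι = κ)
    (hX : ∀ i, 2 < souslin (X i)) : 2 ^< κ < @souslin _ (boxTopology κ X) := by
  let K := κ.ord.ToType
  have hK : (#K).ord = Ordinal.type (α := K) (· < ·) := by simp [K]
  have hKκ : #K = κ := mk_ord_toType κ
  obtain ⟨σ⟩ : Nonempty (ι ≃ K ⊕ K) := Cardinal.eq.1 (by simp [hKκ, hι, add_eq_self hκ])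
  choose U hU hUdisj using fun i =>
    exists_pairwise_disjoint_of_mk_lt_souslin (β := ULift Bool) (by simpa using hX i)
  let W (d : Σ j : K, (Iio j → Bool)) (i : ι) : Set (X i) :=
    (branchCode d (σ i)).elim Set.univ fun b => U i ⟨b⟩
  have hbranches : 2 ^< κ ≤ #(Σ j : K, (Iio j → Bool)) :=
    (powerlt_le_powerlt_left hKκ.ge).trans (two_powerlt_le_mk_branches hK)
  refine hbranches.trans_lt
    (mk_lt_souslin_boxTopology W (fun d i => ?_) (fun d => ?_) fun d d' h => ?_)
  · have : (univ : Set (X i)).Nonempty := (hU i ⟨true⟩).2.mono (subset_univ _)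
    cases h : branchCode d (σ i) <;> simp [W, h, hU, this]
  · have hIic : #(Iic d.1) < κ := (mk_Iic_lt d.1 hK (hκ.trans_eq hKκ.symm)).trans_eq hKκ
    have hIio : #(Iio d.1) < κ := (mk_Iio_lt d.1 hK).trans_eq hKκ
    calc #{i | W d i ≠ Set.univ}
        ≤ #(σ ⁻¹' {t | (branchCode d t).isSome}) := mk_le_mk_of_subset fun i hi => by
          cases h : branchCode d (σ i) <;> simp_all [W]
      _ ≤ #(Sum.inl '' Iic d.1 ∪ Sum.inr '' Iio d.1 : Set (K ⊕ K)) :=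
          (mk_preimage_of_injective _ _ σ.injective).trans
            (mk_le_mk_of_subset (setOf_isSome_branchCode_subset d))
      _ < κ := (mk_union_le _ _).trans_lt
          (add_lt_of_lt hκ (mk_image_le.trans_lt hIic) (mk_image_le.trans_lt hIio))
  · obtain ⟨t, b, b', hb, hb', hbb'⟩ := exists_branchCode_ne_of_ne h
    refine ⟨σ.symm t, ?_⟩
    simpa [W, hb, hb'] using hUdisj (σ.symm t) fun h => hbb' (congrArg ULift.down h)

end BoxTopology

section CardinalArithmetic

theorem power_le_two_power_mul (α μ : Cardinal.{u}) : α ^ μ ≤ 2 ^ (α * μ) :=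
  power_mul (a := 2) ▸ power_le_power_right (cantor α).le

theorem two_powerlt_eq_powerlt {α κ : Cardinal.{u}} (hα : 2 ≤ α) (hκ : ℵ₀ ≤ κ) (hακ : α < κ) :
    2 ^< κ = α ^< κ :=
  le_antisymm (powerlt_le.2 fun _ hμ => (power_le_power_right hα).trans (le_powerlt α hμ))
    (powerlt_le.2 fun _ hμ =>
      (power_le_two_power_mul _ _).trans (le_powerlt 2 (mul_lt_of_lt hκ hακ hμ)))

theorem mk_fun_le_mul_of_forall_exists_le {L A S : Type u} [LinearOrder A] (b : S → L → A)
    (hb : ∀ f : L → A, ∃ s, ∀ m, f m ≤ b s m) {c : Cardinal.{u}}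
    (hc : ∀ s, prod (fun m => #(Iic (b s m))) ≤ c) : #(L → A) ≤ #S * c := by
  choose s hs using hb
  calc #(L → A) ≤ #(Σ s, ∀ m, Iic (b s m)) :=
        mk_le_of_injective (f := fun f => ⟨s f, fun m => ⟨f m, hs f m⟩⟩)
          (Function.LeftInverse.injective (g := fun p m => (p.2 m : A)) fun _ => rfl)
    _ ≤ sum fun _ : S => c := by simpa [mk_sigma, mk_pi] using sum_le_sum _ _ hc
    _ = #S * c := sum_const' S c

/-- Either every `f : L → α` is bounded, and then `α ^ #L ≤ α * c`, or some `f₀` is cofinal, and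
then `α ^ #L ≤ #L ^ #L * c` with `#L ^ #L ≤ 2 ^ #L ≤ c`. -/
theorem power_le_of_forall_prod_le {α c : Cardinal.{u}} (hα : ℵ₀ ≤ α) (hαc : α ≤ c) (L : Type u)
    (h : ∀ g : L → Cardinal.{u}, (∀ m, g m < α) → prod g ≤ c) : α ^ #L ≤ c := by
  let A := α.ord.ToType
  have hA : (#A).ord = Ordinal.type (α := A) (· < ·) := by simp [A]
  have hAα : #A = α := mk_ord_toType α
  have hprod {S : Type u} (b : S → L → A) (s : S) : prod (fun m => #(Iic (b s m))) ≤ c :=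
    h _ fun m => (mk_Iic_lt _ hA (hα.trans_eq hAα.symm)).trans_eq hAα
  have hcc : c * c = c := mul_eq_self (hα.trans hαc)
  rw [← hAα, power_def]
  by_cases hbdd : ∀ f : L → A, ∃ a, ∀ m, f m ≤ a
  · calc #(L → A) ≤ #A * c := mk_fun_le_mul_of_forall_exists_le (fun a _ => a) hbdd (hprod _)
      _ ≤ c * c := by gcongr; exact hAα.trans_le hαc
      _ = c := hcc
  · push Not at hbdd
    obtain ⟨f₀, hf₀⟩ := hbdd
    have hcover (f : L → A) : ∃ τ : L → L, ∀ m, f m ≤ f₀ (τ m) :=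
      ⟨fun m => (hf₀ (f m)).choose, fun m => (hf₀ (f m)).choose_spec.le⟩
    have htwo : 2 ^ #L ≤ c := by
      simpa using h (fun _ => 2) fun _ => (natCast_lt_aleph0 (n := 2)).trans_le hα
    have hLL : #L ^ #L ≤ c := by
      by_cases hL : ℵ₀ ≤ #L
      · exact (power_self_eq hL).trans_le htwo
      · exact (power_lt_aleph0 (not_le.1 hL) (not_le.1 hL)).le.trans (hα.trans hαc)
    calc #(L → A) ≤ #(L → L) * c :=
          mk_fun_le_mul_of_forall_exists_le (fun τ m => f₀ (τ m)) hcover (hprod _)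
      _ ≤ c * c := by gcongr; rwa [← power_def]
      _ = c := hcc

theorem exists_prod_ge_of_lt_power {α κ μ c : Cardinal.{u}} (hα : 2 < α) (hκ : ℵ₀ ≤ κ)
    (hμ : μ < κ) (hc : c < α ^ μ) :
    ∃ (T : Type u) (g : T → Cardinal.{u}), #T < κ ∧ (∀ t, g t < α) ∧ c ≤ prod g := by
  rcases lt_or_ge α κ with hακ | hκα
  · refine ⟨(α * μ).out, fun _ => 2, by simpa using mul_lt_of_lt hκ hακ hμ, fun _ => hα, ?_⟩
    simpa using hc.le.trans (power_le_two_power_mul α μ)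
  rcases lt_or_ge c α with hcα | hαc
  · exact ⟨PUnit, fun _ => c, by simpa using one_lt_aleph0.trans_le hκ, fun _ => hcα, by simp⟩
  by_contra! h
  refine hc.not_ge ?_
  simpa using power_le_of_forall_prod_le (hκ.trans hκα) hαc μ.out fun g hg =>
    (h _ g (by simpa using hμ) hg).le

end CardinalArithmetic

theorem stmt16 (α κ : Cardinal.{u}) (hα : 3 ≤ α) (hκ : ℵ₀ ≤ κ)
    {ι : Type u} (X : ι → Type u) [∀ i, TopologicalSpace (X i)]
    (hI : κ ≤ Order.succ #ι) (hS : ∀ i, α ≤ souslin (X i)) :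
    α ^< κ ≤ @souslin (∀ i, X i) (boxTopology κ X) ∧
    (α < κ → (2 : Cardinal.{u}) ^< κ = α ^< κ ∧
      Order.succ (α ^< κ) ≤ @souslin (∀ i, X i) (boxTopology κ X)) := by
  have h2α : 2 < α := (by norm_num : (2 : Cardinal) < 3).trans_le hα
  have h2S (i : ι) : 2 < souslin (X i) := h2α.trans_le (hS i)
  have hX (i : ι) : Nonempty (X i) := nonempty_of_one_lt_souslin (Cardinal.one_lt_two.trans (h2S i))
  have hTι {T : Type u} (hT : #T < κ) : #T ≤ #ι := Order.lt_succ_iff.1 (hT.trans_le hI)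
  refine ⟨le_of_forall_lt fun c hc => ?_, fun hακ => ?_⟩
  · obtain ⟨μ, hμ, hcμ⟩ : ∃ μ < κ, c < α ^ μ := by
      by_contra! h
      exact hc.not_ge (powerlt_le.2 h)
    obtain ⟨T, g, hTκ, hg, hcg⟩ := exists_prod_ge_of_lt_power h2α hκ hμ hcμ
    exact hcg.trans_lt (prod_lt_souslin_boxTopology_of_mk_le (hTι hTκ) hTκ g fun t i =>
      (hg t).trans_le (hS i))
  have h2 := two_powerlt_eq_powerlt h2α.le hκ hακ
  refine ⟨h2, Order.succ_le_of_lt (h2 ▸ ?_)⟩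
  by_cases hsucc : ∃ ν, κ = Order.succ ν
  · obtain ⟨ν, rfl⟩ := hsucc
    have hν : #ν.out < Order.succ ν := (mk_out ν).trans_lt (Order.lt_succ ν)
    simpa [powerlt_succ] using prod_lt_souslin_boxTopology_of_mk_le (hTι hν) hν (fun _ => 2)
      fun _ => h2S
  · obtain ⟨S, hSκ⟩ := le_mk_iff_exists_set.1 <|
      (Order.le_succ_iff_eq_or_le.1 hI).resolve_left fun h => hsucc ⟨_, h⟩
    exact (two_powerlt_lt_souslin_boxTopology hκ hSκ fun s => h2S s).trans_le
      (souslin_boxTopology_subtype_le S)
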